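/- arXiv:1204.4509 — 6 statements merged into one kernel-verified Lean document; each statement's English description precedes it below -/
import Mathlib

section
/- Let T be a range tree on a finite linearly ordered set of n keys (a balanced binary tree whose leaves are the keys in order, with S(v) the keys below node v). For any query interval [c,d] of keys there exists a set C of O(log n) nodes of T, no one an ancestor of another, such that the keys in [c,d] are exactly the disjoint union of S(v) over v∈C. More precisely, one can take C to consist of nodes hanging off the two root-to-leaf search paths to c and d, and |C| ≤ 2·height(T). -/
/-- A range tree over real keys: a binary tree whose leaves hold the keys. -/
inductive KTree where
  | leaf : ℝ → KTree
  | node : KTree → KTree → KTree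

/-- The set of keys stored at the leaves below a node. -/
noncomputable def KTree.keys : KTree → Finset ℝ
  | .leaf x => {x}
  | .node l r => l.keys ∪ r.keys

/-- Height measured in levels (a single leaf has height 1). -/
def KTree.height : KTree → ℕ
  | .leaf _ => 1
  | .node l r => max l.height r.height + 1

/-- The search-tree property: at every internal node, all keys of the left
subtree precede all keys of the right subtree. -/
def KTree.IsBST : KTree → Prop
  | .leaf _ => True
  | .node l r => l.IsBST ∧ r.IsBST ∧ ∀ x ∈ l.keys, ∀ y ∈ r.keys, x < y

/-- `u` is a subtree of the given tree (a node of it, identified with the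
subtree it roots). -/
def KTree.IsSubtree (u : KTree) : KTree → Prop
  | .leaf x => u = .leaf x
  | .node l r => u = .node l r ∨ u.IsSubtree l ∨ u.IsSubtree r

/-!
The canonical cover of `[c, d]` consists of the maximal subtrees all of whose keys lie in
`[c, d]`. To bound its size, go down from the root while only one child meets `[c, d]`. At the
first node where both children do, the interval is upward closed on the keys of the left child and
downward closed on those of the right child. For such a one-sided predicate, at every node one
child lies entirely inside or entirely outside it, so only one path is followed and at most one
subtree per level is collected.
-/

namespace KTree

lemma keys_nonempty (t : KTree) : t.keys.Nonempty := by
  induction t with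
  | leaf x => exact Finset.singleton_nonempty x
  | node l r ihl _ => exact ihl.mono Finset.subset_union_left

lemma IsSubtree.keys_subset {u t : KTree} (h : u.IsSubtree t) : u.keys ⊆ t.keys := by
  induction t with
  | leaf x => cases h; rfl
  | node l r ihl ihr =>
    rcases h with rfl | h | h
    · rfl
    · exact (ihl h).trans Finset.subset_union_left
    · exact (ihr h).trans Finset.subset_union_right

lemma not_isSubtree_of_disjoint {u v : KTree} (h : Disjoint u.keys v.keys) : ¬ u.IsSubtree v := by
  intro huv
  obtain ⟨x, hx⟩ := u.keys_nonempty
  exact Finset.disjoint_left.mp h hx (huv.keys_subset hx)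

lemma disjoint_keys_of_lt {l r : KTree} (h : ∀ x ∈ l.keys, ∀ y ∈ r.keys, x < y) :
    Disjoint l.keys r.keys :=
  Finset.disjoint_left.mpr fun x hl hr => lt_irrefl x (h x hl x hr)

lemma height_le_node_left (l r : KTree) : l.height + 1 ≤ (node l r).height := by
  simp only [height]; omega

lemma height_le_node_right (l r : KTree) : r.height + 1 ≤ (node l r).height := by
  simp only [height]; omega

lemma height_add_height_le_node (l r : KTree) : l.height + r.height ≤ 2 * (node l r).height := by
  simp only [height]; omega

section Cover

variable {p : ℝ → Prop}

open Classical in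
/-- The maximal subtrees all of whose keys satisfy `p`. -/
noncomputable def cover (p : ℝ → Prop) : KTree → List KTree
  | leaf x => if p x then [leaf x] else []
  | node l r => if ∀ x ∈ (node l r).keys, p x then [node l r] else l.cover p ++ r.cover p

lemma cover_of_forall {t : KTree} (h : ∀ x ∈ t.keys, p x) : t.cover p = [t] := by
  cases t with
  | leaf x => exact if_pos (h x (Finset.mem_singleton_self x))
  | node l r => exact if_pos h

lemma cover_node_of_not_forall {l r : KTree} (h : ¬ ∀ x ∈ (node l r).keys, p x) :
    (node l r).cover p = l.cover p ++ r.cover p :=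
  if_neg h

lemma cover_of_forall_not {t : KTree} (h : ∀ x ∈ t.keys, ¬ p x) : t.cover p = [] := by
  induction t with
  | leaf x => exact if_neg (h x (Finset.mem_singleton_self x))
  | node l r ihl ihr =>
    obtain ⟨x, hx⟩ := (node l r).keys_nonempty
    rw [cover_node_of_not_forall fun hp => h x hx (hp x hx),
      ihl fun y hy => h y (Finset.mem_union_left _ hy),
      ihr fun y hy => h y (Finset.mem_union_right _ hy), List.append_nil]

lemma isSubtree_of_mem_cover {t v : KTree} (hv : v ∈ t.cover p) : v.IsSubtree t := by
  induction t with
  | leaf x =>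
    simp only [cover] at hv
    split at hv
    · rw [List.mem_singleton.mp hv]; rfl
    · simp at hv
  | node l r ihl ihr =>
    by_cases h : ∀ x ∈ (node l r).keys, p x
    · rw [cover_of_forall h, List.mem_singleton] at hv
      rw [hv]; exact Or.inl rfl
    · rw [cover_node_of_not_forall h, List.mem_append] at hv
      exact Or.inr (hv.imp ihl ihr)

lemma pairwise_cover {t : KTree} (ht : t.IsBST) :
    (t.cover p).Pairwise (fun u v => Disjoint u.keys v.keys ∧
      ¬ u.IsSubtree v ∧ ¬ v.IsSubtree u) := by
  induction t with
  | leaf x => simp only [cover]; split <;> simp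
  | node l r ihl ihr =>
    obtain ⟨hl, hr, hlr⟩ := ht
    by_cases h : ∀ x ∈ (node l r).keys, p x
    · simp [cover_of_forall h]
    rw [cover_node_of_not_forall h, List.pairwise_append]
    refine ⟨ihl hl, ihr hr, fun u hu v hv => ?_⟩
    have huv : Disjoint u.keys v.keys := (disjoint_keys_of_lt hlr).mono
      (isSubtree_of_mem_cover hu).keys_subset (isSubtree_of_mem_cover hv).keys_subset
    exact ⟨huv, not_isSubtree_of_disjoint huv, not_isSubtree_of_disjoint huv.symm⟩

lemma foldr_keys_union_append (L M : List KTree) :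
    (L ++ M).foldr (fun v s => v.keys ∪ s) ∅ =
      L.foldr (fun v s => v.keys ∪ s) ∅ ∪ M.foldr (fun v s => v.keys ∪ s) ∅ := by
  induction L with
  | nil => simp
  | cons a L ih => simp [ih, Finset.union_assoc]

lemma foldr_keys_cover [DecidablePred p] (t : KTree) :
    (t.cover p).foldr (fun v s => v.keys ∪ s) ∅ = t.keys.filter p := by
  induction t with
  | leaf x => simp only [cover]; split <;> simp_all [keys, Finset.filter_singleton]
  | node l r ihl ihr =>
    by_cases h : ∀ x ∈ (node l r).keys, p x
    · simp [cover_of_forall h, Finset.filter_true_of_mem h]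
    rw [cover_node_of_not_forall h, foldr_keys_union_append, ihl, ihr, keys,
      Finset.filter_union]

lemma length_cover_leaf_le_one (x : ℝ) : ((leaf x).cover p).length ≤ 1 := by
  simp only [cover]; split <;> simp

lemma length_cover_le_height_of_monotoneOn {t : KTree} (ht : t.IsBST)
    (hp : MonotoneOn p t.keys) : (t.cover p).length ≤ t.height := by
  induction t with
  | leaf x => exact length_cover_leaf_le_one x
  | node l r ihl ihr =>
    obtain ⟨hl, hr, hlr⟩ := ht
    by_cases h : ∀ x ∈ (node l r).keys, p x
    · simp [cover_of_forall h, height]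
    have hpl : MonotoneOn p l.keys := hp.mono fun _ => Finset.mem_union_left _
    have hpr : MonotoneOn p r.keys := hp.mono fun _ => Finset.mem_union_right _
    rw [cover_node_of_not_forall h, List.length_append]
    by_cases hrp : ∀ y ∈ r.keys, p y
    · have := ihl hl hpl
      rw [cover_of_forall hrp, List.length_singleton]
      exact (Nat.add_le_add_right this 1).trans (height_le_node_left l r)
    · -- a key of `r` outside `p` lies above every key of `l`, so no key of `l` is in `p`
      push Not at hrp
      obtain ⟨y, hy, hpy⟩ := hrp
      have hnl : ∀ x ∈ l.keys, ¬ p x := fun x hx hpx =>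
        hpy (hp (Finset.mem_union_left _ hx) (Finset.mem_union_right _ hy) (hlr x hx y hy).le hpx)
      rw [cover_of_forall_not hnl, List.length_nil, Nat.zero_add]
      exact (ihr hr hpr).trans (Nat.le_of_succ_le (height_le_node_right l r))

lemma length_cover_le_height_of_antitoneOn {t : KTree} (ht : t.IsBST)
    (hp : AntitoneOn p t.keys) : (t.cover p).length ≤ t.height := by
  induction t with
  | leaf x => exact length_cover_leaf_le_one x
  | node l r ihl ihr =>
    obtain ⟨hl, hr, hlr⟩ := ht
    by_cases h : ∀ x ∈ (node l r).keys, p x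
    · simp [cover_of_forall h, height]
    have hpl : AntitoneOn p l.keys := hp.mono fun _ => Finset.mem_union_left _
    have hpr : AntitoneOn p r.keys := hp.mono fun _ => Finset.mem_union_right _
    rw [cover_node_of_not_forall h, List.length_append]
    by_cases hlp : ∀ x ∈ l.keys, p x
    · have := ihr hr hpr
      rw [cover_of_forall hlp, List.length_singleton, Nat.add_comm]
      exact (Nat.add_le_add_right this 1).trans (height_le_node_right l r)
    · push Not at hlp
      obtain ⟨x, hx, hpx⟩ := hlp
      have hnr : ∀ y ∈ r.keys, ¬ p y := fun y hy hpy =>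
        hpx (hp (Finset.mem_union_left _ hx) (Finset.mem_union_right _ hy) (hlr x hx y hy).le hpy)
      rw [cover_of_forall_not hnr, List.length_nil, Nat.add_zero]
      exact (ihl hl hpl).trans (Nat.le_of_succ_le (height_le_node_left l r))

end Cover

lemma length_cover_Icc_le {t : KTree} (ht : t.IsBST) (c d : ℝ) :
    (t.cover (fun x => c ≤ x ∧ x ≤ d)).length ≤ 2 * t.height := by
  induction t with
  | leaf x => exact (length_cover_leaf_le_one x).trans (by simp [height])
  | node l r ihl ihr =>
    obtain ⟨hl, hr, hlr⟩ := ht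
    by_cases h : ∀ x ∈ (node l r).keys, c ≤ x ∧ x ≤ d
    · simp only [cover_of_forall h, List.length_singleton, height]; omega
    rw [cover_node_of_not_forall h, List.length_append]
    by_cases hl_out : ∀ x ∈ l.keys, ¬ (c ≤ x ∧ x ≤ d)
    · rw [cover_of_forall_not hl_out, List.length_nil, Nat.zero_add]
      exact (ihr hr).trans (by have := height_le_node_right l r; omega)
    by_cases hr_out : ∀ y ∈ r.keys, ¬ (c ≤ y ∧ y ≤ d)
    · rw [cover_of_forall_not hr_out, List.length_nil, Nat.add_zero]
      exact (ihl hl).trans (by have := height_le_node_left l r; omega)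
    push Not at hl_out hr_out
    obtain ⟨a, ha, hca, -⟩ := hl_out
    obtain ⟨b, hb, -, hbd⟩ := hr_out
    have hmono : MonotoneOn (fun x => c ≤ x ∧ x ≤ d) l.keys := fun x _ y hy hxy hpx =>
      ⟨hpx.1.trans hxy, (hlr y hy b hb).le.trans hbd⟩
    have hanti : AntitoneOn (fun x => c ≤ x ∧ x ≤ d) r.keys := fun x hx y _ hxy hpy =>
      ⟨hca.trans (hlr a ha x hx).le, hxy.trans hpy.2⟩
    exact (Nat.add_le_add (length_cover_le_height_of_monotoneOn hl hmono)
      (length_cover_le_height_of_antitoneOn hr hanti)).trans (height_add_height_le_node l r)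

end KTree

/-- **Canonical decomposition of an interval in a range tree.**
For any range tree `T` (with the BST property) and any query interval `[c,d]`
there is a family `C` of nodes of `T`, pairwise key-disjoint and no one a
subtree (descendant) of another, such that the keys of `T` lying in `[c,d]`
are exactly the disjoint union of the key sets `keys v`, `v ∈ C`, and
`|C| ≤ 2 · height T`. -/
theorem stmt4 (T : KTree) (hbst : T.IsBST) (c d : ℝ) :
    ∃ C : List KTree,
      (∀ v ∈ C, v.IsSubtree T) ∧
      C.Pairwise (fun u v => Disjoint u.keys v.keys ∧
        ¬ u.IsSubtree v ∧ ¬ v.IsSubtree u) ∧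
      (C.foldr (fun v s => v.keys ∪ s) ∅) = T.keys.filter (fun x => c ≤ x ∧ x ≤ d) ∧
      C.length ≤ 2 * T.height :=
  ⟨T.cover (fun x => c ≤ x ∧ x ≤ d), fun _ => KTree.isSubtree_of_mem_cover,
    KTree.pairwise_cover hbst, KTree.foldr_keys_cover T, KTree.length_cover_Icc_le hbst c d⟩
end

section
/- Let S be a finite set of planar points with pairwise distinct x- and y-coordinates, and let q be a point. A point p∈S with p.x ≤ q.x and p.y ≤ q.y is rectangularly visible from q if and only if p is a maximal point of the set S ∩ ([0,q.x]×[0,q.y]) (i.e., p is not dominated by any other point of that set). -/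
theorem Prod.fst_lt_and_snd_lt_of_le_of_coords_ne {α β : Type*} [PartialOrder α] [PartialOrder β]
    {a b : α × β} (h : a ≤ b) (hne : a.1 ≠ b.1 ∧ a.2 ≠ b.2) : a.1 < b.1 ∧ a.2 < b.2 :=
  ⟨lt_of_le_of_ne h.1 hne.1, lt_of_le_of_ne h.2 hne.2⟩

theorem forall_not_mem_openBox_iff_of_coords_ne {α β : Type*} [PartialOrder α] [PartialOrder β]
    (S : Set (α × β)) (p q : α × β)
    (hp : ∀ r ∈ S, r ≠ p → r.1 ≠ p.1 ∧ r.2 ≠ p.2) (hq : ∀ r ∈ S, r.1 ≠ q.1 ∧ r.2 ≠ q.2) :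
    (∀ r ∈ S, ¬(p.1 < r.1 ∧ r.1 < q.1 ∧ p.2 < r.2 ∧ r.2 < q.2)) ↔
    (∀ r ∈ S, r.1 ≤ q.1 → r.2 ≤ q.2 → r ≠ p → ¬(p.1 ≤ r.1 ∧ p.2 ≤ r.2)) := by
  constructor
  · intro hbox r hr hrx hry hrp hpr
    obtain ⟨hpr₁, hpr₂⟩ := Prod.fst_lt_and_snd_lt_of_le_of_coords_ne (a := p) (b := r) hpr
      ⟨(hp r hr hrp).1.symm, (hp r hr hrp).2.symm⟩
    obtain ⟨hrq₁, hrq₂⟩ := Prod.fst_lt_and_snd_lt_of_le_of_coords_ne (a := r) (b := q) ⟨hrx, hry⟩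
      (hq r hr)
    exact hbox r hr ⟨hpr₁, hrq₁, hpr₂, hrq₂⟩
  · rintro hmax r hr ⟨hpr₁, hrq₁, hpr₂, hrq₂⟩
    exact hmax r hr hrq₁.le hrq₂.le (by rintro rfl; exact lt_irrefl _ hpr₁) ⟨hpr₁.le, hpr₂.le⟩

theorem stmt5_general (S : Finset (ℝ × ℝ)) (q p : ℝ × ℝ)
    (hq : q ∉ S)
    (hdist : ∀ r ∈ S ∪ {q}, ∀ s ∈ S ∪ {q}, r ≠ s → r.1 ≠ s.1 ∧ r.2 ≠ s.2)
    (hp : p ∈ S) :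
    (∀ r ∈ S, ¬(p.1 < r.1 ∧ r.1 < q.1 ∧ p.2 < r.2 ∧ r.2 < q.2)) ↔
    (∀ r ∈ S, r.1 ≤ q.1 → r.2 ≤ q.2 → r ≠ p → ¬(p.1 ≤ r.1 ∧ p.2 ≤ r.2)) := by
  have hS_sub : ∀ r ∈ S, r ∈ S ∪ {q} := fun r hr => Finset.mem_union_left _ hr
  have hq_mem : q ∈ S ∪ {q} := Finset.mem_union_right _ (Finset.mem_singleton_self q)
  refine forall_not_mem_openBox_iff_of_coords_ne (S : Set (ℝ × ℝ)) p q
    (fun r hr hrp => hdist r (hS_sub r hr) p (hS_sub p hp) hrp) (fun r hr => ?_)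
  exact hdist r (hS_sub r hr) q hq_mem (by rintro rfl; exact hq hr)

/-- **Rectangular visibility = maximality in the dominated quadrant.**
`S` is a finite set of planar points, `q ∉ S` a query point, and all points of
`S ∪ {q}` have pairwise distinct `x`- and `y`-coordinates and nonnegative
coordinates.  Let `p ∈ S` with `p.x ≤ q.x` and `p.y ≤ q.y`.  Then `p` is
rectangularly visible from `q` (the open axis-parallel rectangle with opposite
corners `p` and `q` contains no point of `S`) if and only if `p` is a maximal
point of `S ∩ ([0,q.x] × [0,q.y])`, i.e. `p` is dominated by no other point of
that set. -/
theorem stmt5 (S : Finset (ℝ × ℝ)) (q p : ℝ × ℝ)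
    (hq : q ∉ S)
    (hdist : ∀ r ∈ S ∪ {q}, ∀ s ∈ S ∪ {q}, r ≠ s → r.1 ≠ s.1 ∧ r.2 ≠ s.2)
    (hnonneg : ∀ r ∈ S ∪ {q}, 0 ≤ r.1 ∧ 0 ≤ r.2)
    (hp : p ∈ S) (hpx : p.1 ≤ q.1) (hpy : p.2 ≤ q.2) :
    (∀ r ∈ S, ¬(p.1 < r.1 ∧ r.1 < q.1 ∧ p.2 < r.2 ∧ r.2 < q.2)) ↔
    (∀ r ∈ S, r.1 ≤ q.1 → r.2 ≤ q.2 → r ≠ p → ¬(p.1 ≤ r.1 ∧ p.2 ≤ r.2)) :=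
  stmt5_general S q p hq hdist hp
end

section
/- Let S be a finite set of planar points with distinct x-coordinates and distinct y-coordinates, and Q=[a,b]×[c,d]. Define p₁ to be the point of S∩Q with maximal x-coordinate, and inductively pᵢ₊₁ to be the point of maximal x-coordinate in S ∩ ([a, pᵢ.x) × (pᵢ.y, d]). Then the sequence p₁, p₂, … (until the query region becomes empty) enumerates exactly the maximal points of S∩Q, in order of strictly decreasing x-coordinate and strictly increasing y-coordinate. -/
/-!
Each `pᵢ` has the largest `x`-coordinate among the points of `S ∩ Q` lying above it: a point
above `pᵢ₊₁` is above `pᵢ`, hence left of `pᵢ`, hence in the query region of `pᵢ`. With distinct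
coordinates this makes every `pᵢ` maximal. Conversely, a maximal point `r` different from all `pᵢ`
lies in the query region of every `pᵢ`: it is left of `pᵢ` by the choice of `pᵢ`, and then above
`pᵢ` because `pᵢ` does not dominate it. For the last `pᵢ` this contradicts termination.
-/

open Set

lemma IsMaxOn.lt_of_injOn {γ δ : Type*} [LinearOrder δ] {f : γ → δ} {T U : Set γ} {w s : γ}
    (hmax : IsMaxOn f U w) (hf : InjOn f T) (hUT : U ⊆ T) (hw : w ∈ T) (hs : s ∈ U)
    (hne : s ≠ w) : f s < f w :=
  (isMaxOn_iff.1 hmax s hs).lt_of_ne fun he => hne (hf (hUT hs) hw he)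

namespace Staircase

variable {α β : Type*}

lemma injOn_fst_and_snd {T : Set (α × β)}
    (h : ∀ p ∈ T, ∀ q ∈ T, p ≠ q → p.1 ≠ q.1 ∧ p.2 ≠ q.2) :
    InjOn Prod.fst T ∧ InjOn Prod.snd T :=
  ⟨fun p hp q hq he => by_contra fun hne => (h p hp q hq hne).1 he,
    fun p hp q hq he => by_contra fun hne => (h p hp q hq hne).2 he⟩

variable [LinearOrder α] [LinearOrder β]

def upperLeft (w : α × β) : Set (α × β) := {r | r.1 < w.1 ∧ w.2 < r.2}

def box (a b : α) (c d : β) : Set (α × β) := {p | a ≤ p.1 ∧ p.1 ≤ b ∧ c ≤ p.2 ∧ p.2 ≤ d}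

variable {T : Set (α × β)} {r w : α × β}

lemma box_inter_upperLeft {a b : α} {c d : β} (hw : w ∈ box a b c d) :
    box a b c d ∩ upperLeft w = {r | a ≤ r.1 ∧ r.1 < w.1 ∧ w.2 < r.2 ∧ r.2 ≤ d} := by
  ext r
  simp only [box, upperLeft, mem_inter_iff, mem_ofPred_eq] at hw ⊢
  constructor
  · rintro ⟨⟨ha, -, -, hd⟩, h1, h2⟩
    exact ⟨ha, h1, h2, hd⟩
  · rintro ⟨ha, h1, h2, hd⟩
    exact ⟨⟨ha, h1.le.trans hw.2.1, hw.2.2.1.trans h2.le, hd⟩, h1, h2⟩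

lemma maximal_of_forall_fst_lt (hsnd : InjOn Prod.snd T) (hw : w ∈ T)
    (h : ∀ s ∈ T, w.2 < s.2 → s.1 < w.1) : Maximal (· ∈ T) w := by
  refine maximal_iff_forall_gt.2 ⟨hw, fun s hws hs => ?_⟩
  have hsnd_lt : w.2 < s.2 := hws.le.2.lt_of_ne fun he => hws.ne (hsnd hw hs he)
  exact (h s hs hsnd_lt).not_ge hws.le.1

lemma mem_upperLeft_of_maximal (hfst : InjOn Prod.fst T) (hr : Maximal (· ∈ T) r)
    (hw : w ∈ T) (hne : w ≠ r) (hle : r.1 ≤ w.1) : r ∈ upperLeft w :=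
  ⟨hle.lt_of_ne fun he => hne (hfst hw hr.prop he.symm),
    lt_of_not_ge fun h2 => hne (hr.eq_of_le hw ⟨hle, h2⟩).symm⟩

structure IsGreedyStaircase (T : Set (α × β)) {n : ℕ} (p : Fin (n + 1) → α × β) : Prop where
  mem_zero : p 0 ∈ T
  isMaxOn_zero : IsMaxOn Prod.fst T (p 0)
  mem_succ : ∀ i : Fin n, p i.succ ∈ T ∩ upperLeft (p i.castSucc)
  isMaxOn_succ : ∀ i : Fin n, IsMaxOn Prod.fst (T ∩ upperLeft (p i.castSucc)) (p i.succ)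

namespace IsGreedyStaircase

variable {n : ℕ} {p : Fin (n + 1) → α × β}

lemma strictAnti_fst (hp : IsGreedyStaircase T p) : StrictAnti fun i => (p i).1 :=
  Fin.strictAnti_iff_succ_lt.2 fun i => (hp.mem_succ i).2.1

lemma strictMono_snd (hp : IsGreedyStaircase T p) : StrictMono fun i => (p i).2 :=
  Fin.strictMono_iff_lt_succ.2 fun i => (hp.mem_succ i).2.2

lemma mem (hp : IsGreedyStaircase T p) (i : Fin (n + 1)) : p i ∈ T :=
  Fin.cases hp.mem_zero (fun i => (hp.mem_succ i).1) i

lemma fst_lt_of_snd_lt (hp : IsGreedyStaircase T p) (hfst : InjOn Prod.fst T)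
    (i : Fin (n + 1)) {s : α × β} (hs : s ∈ T) (hlt : (p i).2 < s.2) : s.1 < (p i).1 := by
  induction i using Fin.induction generalizing s with
  | zero =>
    exact hp.isMaxOn_zero.lt_of_injOn hfst subset_rfl hp.mem_zero hs
      (ne_of_apply_ne Prod.snd hlt.ne')
  | succ i ih =>
    have hlt' := (hp.mem_succ i).2.2.trans hlt
    exact (hp.isMaxOn_succ i).lt_of_injOn hfst inter_subset_left (hp.mem i.succ)
      ⟨hs, ih hs hlt', hlt'⟩ (ne_of_apply_ne Prod.snd hlt.ne')

lemma maximal (hp : IsGreedyStaircase T p) (hfst : InjOn Prod.fst T)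
    (hsnd : InjOn Prod.snd T) (i : Fin (n + 1)) : Maximal (· ∈ T) (p i) :=
  maximal_of_forall_fst_lt hsnd (hp.mem i) fun _ hs hlt => hp.fst_lt_of_snd_lt hfst i hs hlt

lemma mem_upperLeft_of_maximal_of_notMem_range (hp : IsGreedyStaircase T p)
    (hfst : InjOn Prod.fst T) (hr : Maximal (· ∈ T) r) (hrp : r ∉ range p) (i : Fin (n + 1)) :
    r ∈ upperLeft (p i) := by
  induction i using Fin.induction with
  | zero =>
    exact mem_upperLeft_of_maximal hfst hr hp.mem_zero (fun h => hrp ⟨0, h⟩)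
      (isMaxOn_iff.1 hp.isMaxOn_zero r hr.prop)
  | succ i ih =>
    exact mem_upperLeft_of_maximal hfst hr (hp.mem i.succ) (fun h => hrp ⟨_, h⟩)
      (isMaxOn_iff.1 (hp.isMaxOn_succ i) r ⟨hr.prop, ih⟩)

theorem range_eq (hp : IsGreedyStaircase T p) (hfst : InjOn Prod.fst T)
    (hsnd : InjOn Prod.snd T) (hlast : T ∩ upperLeft (p (Fin.last n)) = ∅) :
    range p = {r | Maximal (· ∈ T) r} := by
  refine Subset.antisymm (range_subset_iff.2 (hp.maximal hfst hsnd)) fun r hr => ?_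
  by_contra hrp
  exact (eq_empty_iff_forall_notMem.1 hlast) r
    ⟨hr.prop, hp.mem_upperLeft_of_maximal_of_notMem_range hfst hr hrp _⟩

end IsGreedyStaircase

end Staircase

open Staircase

/-- **Enumerating maximal points by iterated range successor queries.**
`S` has pairwise distinct `x`- and `y`-coordinates, `Q = [a,b] × [c,d]`.
`p 0` is the point of maximal `x`-coordinate in `S ∩ Q`, and `p (i+1)` is the
point of maximal `x`-coordinate in `S ∩ ([a, (p i).x) × ((p i).y, d])`; the
iteration stops (after `k` points) when this region contains no point of `S`.
Then the sequence enumerates exactly the maximal points of `S ∩ Q`, with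
strictly decreasing `x`-coordinates and strictly increasing `y`-coordinates. -/
theorem stmt6 (S : Finset (ℝ × ℝ)) (a b c d : ℝ)
    (hdist : ∀ p ∈ S, ∀ q ∈ S, p ≠ q → p.1 ≠ q.1 ∧ p.2 ≠ q.2)
    (Q : Set (ℝ × ℝ)) (hQ : Q = {p | a ≤ p.1 ∧ p.1 ≤ b ∧ c ≤ p.2 ∧ p.2 ≤ d})
    (R : ℝ × ℝ → Set (ℝ × ℝ))
    (hR : R = fun w => {r | a ≤ r.1 ∧ r.1 < w.1 ∧ w.2 < r.2 ∧ r.2 ≤ d})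
    (k : ℕ) (hk : 0 < k) (p : Fin k → ℝ × ℝ)
    (h0 : p ⟨0, hk⟩ ∈ S ∧ p ⟨0, hk⟩ ∈ Q ∧ ∀ r ∈ S, r ∈ Q → r.1 ≤ (p ⟨0, hk⟩).1)
    (hstep : ∀ i j : Fin k, (j : ℕ) = (i : ℕ) + 1 →
      p j ∈ S ∧ p j ∈ R (p i) ∧ ∀ r ∈ S, r ∈ R (p i) → r.1 ≤ (p j).1)
    (hterm : ∀ r ∈ S, r ∉ R (p ⟨k - 1, Nat.sub_lt hk one_pos⟩)) :
    (∀ i j : Fin k, i < j → (p j).1 < (p i).1 ∧ (p i).2 < (p j).2) ∧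
    Set.range p =
      {r | r ∈ S ∧ r ∈ Q ∧ ∀ s ∈ S, s ∈ Q → s ≠ r → ¬(r.1 ≤ s.1 ∧ r.2 ≤ s.2)} := by
  obtain ⟨n, rfl⟩ : ∃ n, k = n + 1 := ⟨k - 1, by omega⟩
  change Q = box a b c d at hQ
  subst hQ hR
  set T := (S : Set (ℝ × ℝ)) ∩ box a b c d
  obtain ⟨hfst, hsnd⟩ := injOn_fst_and_snd (T := T) fun r hr s hs => hdist r hr.1 s hs.1
  have hbox : ∀ i, p i ∈ box a b c d := Fin.induction h0.2.1 fun i hi =>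
    ((box_inter_upperLeft hi).ge (hstep i.castSucc i.succ rfl).2.1).1
  have hquery : ∀ i,
      {r | a ≤ r.1 ∧ r.1 < (p i).1 ∧ (p i).2 < r.2 ∧ r.2 ≤ d} ∩ S = T ∩ upperLeft (p i) := by
    intro i
    rw [← box_inter_upperLeft (hbox i), inter_comm _ (S : Set (ℝ × ℝ)), inter_assoc]
  have hp : IsGreedyStaircase T p :=
    { mem_zero := ⟨h0.1, h0.2.1⟩
      isMaxOn_zero := isMaxOn_iff.2 fun r hr => h0.2.2 r hr.1 hr.2
      mem_succ := fun i => by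
        obtain ⟨hS, hR, -⟩ := hstep i.castSucc i.succ rfl
        exact hquery _ ▸ ⟨hR, hS⟩
      isMaxOn_succ := fun i => by
        obtain ⟨-, -, hmax⟩ := hstep i.castSucc i.succ rfl
        rw [← hquery]
        exact isMaxOn_iff.2 fun r hr => hmax r hr.2 hr.1 }
  have hlast : T ∩ upperLeft (p (Fin.last n)) = ∅ := by
    rw [← hquery, eq_empty_iff_forall_notMem]
    exact fun r hr => hterm r hr.2 hr.1
  refine ⟨fun i j hij => ⟨hp.strictAnti_fst hij, hp.strictMono_snd hij⟩, ?_⟩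
  rw [hp.range_eq hfst hsnd hlast]
  ext r
  simp only [maximal_iff, Prod.le_def, T, mem_inter_iff, Finset.mem_coe, mem_ofPred_eq]
  grind
end

section
/- Let S be a finite set of points with distinct x-coordinates and let v_c be a node of a range tree on y-coordinates that is the lowest common ancestor of the leaves for c and d, with left child v_l and right child v_r. Then S ∩ ([a,b]×[c,d]) = (S(v_l) ∩ ([a,b]×[c,∞))) ∪ (S(v_r) ∩ ([a,b]×(−∞,d])), and the union is disjoint. -/
/-!
Points of the left child lie strictly below some point of the right child whose `y` is at most `d`,
so their `y` is automatically at most `d`; symmetrically the `y` of every point of the right child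
is at least `c`. Hence each half-bounded query on a child is the full query restricted to that
child, and the two halves cover the query because the children cover the `y`-range `[c,d]`.
They are disjoint because no point lies strictly below itself.
-/

section KeyOrder

variable {α β : Type*} [Preorder β] {key : α → β} {Sl Sr : Set α}

lemma key_le_of_mem_lower (horder : ∀ p ∈ Sl, ∀ q ∈ Sr, key p < key q) {d : β}
    (hpred : ∃ q ∈ Sr, key q ≤ d) {p : α} (hp : p ∈ Sl) : key p ≤ d := by
  obtain ⟨q, hq, hqd⟩ := hpred
  exact (horder p hp q hq).le.trans hqd

lemma le_key_of_mem_upper (horder : ∀ p ∈ Sl, ∀ q ∈ Sr, key p < key q) {c : β}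
    (hsucc : ∃ p ∈ Sl, c ≤ key p) {q : α} (hq : q ∈ Sr) : c ≤ key q := by
  obtain ⟨p, hp, hcp⟩ := hsucc
  exact hcp.trans (horder p hp q hq).le

lemma disjoint_of_forall_key_lt (horder : ∀ p ∈ Sl, ∀ q ∈ Sr, key p < key q) :
    Disjoint Sl Sr :=
  Set.disjoint_left.2 fun p hl hr => lt_irrefl _ (horder p hl p hr)

end KeyOrder

/-- **Splitting a range query at the LCA of a range tree on `y`-coordinates.**
`Sl` and `Sr` are the point sets of the left and right children of the lowest
common ancestor `v_c` of the leaves for `c` and `d`: they are subsets of `S`,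
every point of `S` with `y ∈ [c,d]` lies in `Sl ∪ Sr`, all `y`-coordinates of
`Sl` precede those of `Sr`, the predecessor leaf of `d` is below the right
child (some point of `Sr` has `y ≤ d`) and the successor leaf of `c` is below
the left child (some point of `Sl` has `y ≥ c`).  Then
`S ∩ ([a,b] × [c,d]) = (Sl ∩ ([a,b] × [c,∞))) ∪ (Sr ∩ ([a,b] × (−∞,d]))`,
and the union is disjoint. -/
theorem stmt12 (S Sl Sr : Set (ℝ × ℝ)) (a b c d : ℝ)
    (hl : Sl ⊆ S) (hr : Sr ⊆ S)
    (hcover : ∀ p ∈ S, c ≤ p.2 → p.2 ≤ d → p ∈ Sl ∪ Sr)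
    (horder : ∀ p ∈ Sl, ∀ q ∈ Sr, p.2 < q.2)
    (hpredd : ∃ q ∈ Sr, q.2 ≤ d)
    (hsuccc : ∃ p ∈ Sl, c ≤ p.2) :
    {p ∈ S | a ≤ p.1 ∧ p.1 ≤ b ∧ c ≤ p.2 ∧ p.2 ≤ d} =
      {p ∈ Sl | a ≤ p.1 ∧ p.1 ≤ b ∧ c ≤ p.2} ∪
        {p ∈ Sr | a ≤ p.1 ∧ p.1 ≤ b ∧ p.2 ≤ d} ∧
    Disjoint {p ∈ Sl | a ≤ p.1 ∧ p.1 ≤ b ∧ c ≤ p.2}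
      {p ∈ Sr | a ≤ p.1 ∧ p.1 ≤ b ∧ p.2 ≤ d} := by
  refine ⟨Set.ext fun p => ⟨?_, ?_⟩,
    (disjoint_of_forall_key_lt horder).mono (Set.sep_subset _ _) (Set.sep_subset _ _)⟩
  · rintro ⟨hpS, ha, hb, hc, hd⟩
    rcases hcover p hpS hc hd with hpl | hpr
    exacts [Or.inl ⟨hpl, ha, hb, hc⟩, Or.inr ⟨hpr, ha, hb, hd⟩]
  · rintro (⟨hpl, ha, hb, hc⟩ | ⟨hpr, ha, hb, hd⟩)
    · exact ⟨hl hpl, ha, hb, hc, key_le_of_mem_lower horder hpredd hpl⟩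
    · exact ⟨hr hpr, ha, hb, le_key_of_mem_upper horder hsuccc hpr, hd⟩
end

section
/- One-sided sorted reporting correctness: Let S be a finite set of planar points with distinct x- and distinct y-coordinates. For each point p let V(p) be the list of the min(ℓ, |{p' : p'.y ≤ p.y}|) points p' with p'.y ≤ p.y having smallest x-coordinates, sorted by increasing x. For a threshold c, let p_c be the point of S with maximal y-coordinate among those with y ≤ c. Then for every k ≤ ℓ, the first k elements of V(p_c) are exactly the k points of {p∈S : p.y ≤ c} with smallest x-coordinates, in increasing x order. -/
/-!
The hypotheses on `V` say that it lists the `min ℓ |T|` smallest points of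
`T = {p ∈ S : p.y ≤ p_c.y}` by `x`-coordinate, in increasing order; any prefix of such a list
of length `k ≤ ℓ` lists the `min k |T|` smallest ones. By maximality of `p_c`, `T` is also
`{p ∈ S : p.y ≤ c}`.
-/

namespace List

variable {α β : Type*} [LinearOrder β]

def IsSortedLeastPrefix (f : α → β) (T : Finset α) (n : ℕ) (V : List α) : Prop :=
  V.Pairwise (fun p q => f p < f q) ∧ (∀ p ∈ V, p ∈ T) ∧ V.length = min n T.card ∧
    ∀ q ∈ T, q ∉ V → ∀ r ∈ V, f r < f q

theorem mem_drop_of_mem_of_notMem_take {V : List α} {q : α} {k : ℕ} (hq : q ∈ V)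
    (hqk : q ∉ V.take k) : q ∈ V.drop k := by
  rw [← take_append_drop k V, mem_append] at hq
  exact hq.resolve_left hqk

theorem IsSortedLeastPrefix.take {f : α → β} {T : Finset α} {n : ℕ} {V : List α}
    (hV : V.IsSortedLeastPrefix f T n) {k : ℕ} (hk : k ≤ n) :
    (V.take k).IsSortedLeastPrefix f T k := by
  obtain ⟨hsorted, hmem, hlen, hleft⟩ := hV
  have htake : (V.take k).Sublist V := take_sublist k V
  refine ⟨hsorted.sublist htake, fun p hp => hmem p (htake.mem hp), ?_, ?_⟩
  · rw [length_take, hlen]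
    omega
  · intro q hqT hqk r hr
    by_cases hqV : q ∈ V
    · exact hsorted.rel_of_mem_take_of_mem_drop hr (mem_drop_of_mem_of_notMem_take hqV hqk)
    · exact hleft q hqT hqV r (htake.mem hr)

end List

theorem stmt16_general (S : Finset (ℝ × ℝ))
    (ℓ : ℕ) (c : ℝ) (pc : ℝ × ℝ)
    (hpc : pc ∈ S ∧ pc.2 ≤ c ∧ ∀ q ∈ S, q.2 ≤ c → q.2 ≤ pc.2)
    (V : List (ℝ × ℝ))
    (hVsorted : V.Pairwise (fun p q => p.1 < q.1))
    (hVmem : ∀ p ∈ V, p ∈ S ∧ p.2 ≤ pc.2)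
    (hVlen : V.length = min ℓ (S.filter (fun p => p.2 ≤ pc.2)).card)
    (hVleft : ∀ q ∈ S, q.2 ≤ pc.2 → q ∉ V → ∀ r ∈ V, r.1 < q.1)
    (k : ℕ) (hk : k ≤ ℓ) :
    (V.take k).Pairwise (fun p q => p.1 < q.1) ∧
    (∀ p ∈ V.take k, p ∈ S ∧ p.2 ≤ c) ∧
    (V.take k).length = min k (S.filter (fun p => p.2 ≤ c)).card ∧
    ∀ q ∈ S, q.2 ≤ c → q ∉ V.take k → ∀ r ∈ V.take k, r.1 < q.1 := by
  obtain ⟨-, hpcc, hmax⟩ := hpc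
  have hfilter : S.filter (fun p => p.2 ≤ pc.2) = S.filter (fun p => p.2 ≤ c) :=
    Finset.filter_congr fun p hp => ⟨fun h => h.trans hpcc, hmax p hp⟩
  have hV : V.IsSortedLeastPrefix Prod.fst (S.filter (fun p => p.2 ≤ c)) ℓ := by
    rw [← hfilter]
    refine ⟨hVsorted, fun p hp => Finset.mem_filter.mpr (hVmem p hp), hVlen, ?_⟩
    intro q hq
    exact hVleft q (Finset.mem_filter.mp hq).1 (Finset.mem_filter.mp hq).2
  obtain ⟨hsorted, hmem, hlen, hleft⟩ := hV.take hk
  exact ⟨hsorted, fun p hp => Finset.mem_filter.mp (hmem p hp), hlen,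
    fun q hqS hqc => hleft q (Finset.mem_filter.mpr ⟨hqS, hqc⟩)⟩

/-- **Correctness of one-sided sorted reporting via the lists `V(p)`.**
`S` has pairwise distinct `x`- and `y`-coordinates.  For the query threshold
`c`, `p_c` is the point of `S` of maximal `y`-coordinate among those with
`y ≤ c`, and `V = V(p_c)` is the list of the `min ℓ |{p' : p'.y ≤ p_c.y}|`
points `p'` with `p'.y ≤ p_c.y` of smallest `x`-coordinates, sorted by
increasing `x`.  Then for every `k ≤ ℓ`, the first `k` elements of `V` are
exactly the `k` points of `{p ∈ S : p.y ≤ c}` with smallest `x`-coordinates,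
in increasing `x`-order. -/
theorem stmt16 (S : Finset (ℝ × ℝ))
    (hdist : ∀ p ∈ S, ∀ q ∈ S, p ≠ q → p.1 ≠ q.1 ∧ p.2 ≠ q.2)
    (ℓ : ℕ) (c : ℝ) (pc : ℝ × ℝ)
    (hpc : pc ∈ S ∧ pc.2 ≤ c ∧ ∀ q ∈ S, q.2 ≤ c → q.2 ≤ pc.2)
    (V : List (ℝ × ℝ))
    (hVsorted : V.Pairwise (fun p q => p.1 < q.1))
    (hVmem : ∀ p ∈ V, p ∈ S ∧ p.2 ≤ pc.2)
    (hVlen : V.length = min ℓ (S.filter (fun p => p.2 ≤ pc.2)).card)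
    (hVleft : ∀ q ∈ S, q.2 ≤ pc.2 → q ∉ V → ∀ r ∈ V, r.1 < q.1)
    (k : ℕ) (hk : k ≤ ℓ) :
    (V.take k).Pairwise (fun p q => p.1 < q.1) ∧
    (∀ p ∈ V.take k, p ∈ S ∧ p.2 ≤ c) ∧
    (V.take k).length = min k (S.filter (fun p => p.2 ≤ c)).card ∧
    ∀ q ∈ S, q.2 ≤ c → q ∉ V.take k → ∀ r ∈ V.take k, r.1 < q.1 :=
  stmt16_general S ℓ c pc hpc V hVsorted hVmem hVlen hVleft k hk
end

section
/- Reporting via recursive range-minimum splitting: Let A : {l,…,r} → ℕ be injective. Define a process on a set Q of triples (value, index, interval): initialize with (A[k₀], k₀, [l,r]) where k₀ = argmin_{l≤t≤r} A[t]; repeatedly extract the triple with minimal value, output its index, and for its interval [l_t,r_t] split at the extracted index i_t, inserting the argmin triples of [l_t, i_t−1] and [i_t+1, r_t] (when nonempty). Then the process outputs every index in {l,…,r} exactly once, in increasing order of A-value. -/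
/-!
The intervals in the queue are always nonempty, pairwise disjoint, and together cover exactly
the indices not yet reported. The reported index is the argmin of one of them whose value is
minimal among all argmins, so it minimizes `A` over everything still unreported.
So the process is a selection sort of `{l,…,r}` by `A`: it removes a minimum of the remaining
set at each step, which reports every element exactly once and, by injectivity, in strictly
increasing order of value.
-/

section EraseSequence

variable {α : Type*} [DecidableEq α] {S : ℕ → Finset α} {x : ℕ → α} {N : ℕ}

def IsEraseSeq (S : ℕ → Finset α) (x : ℕ → α) (N : ℕ) : Prop :=
  ∀ n < N, x n ∈ S n ∧ S (n + 1) = (S n).erase (x n)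

theorem IsEraseSeq.subset (hS : IsEraseSeq S x N)
    {m n : ℕ} (hmn : m ≤ n) (hn : n ≤ N) : S n ⊆ S m := by
  induction n, hmn using Nat.le_induction with
  | base => exact subset_rfl
  | succ n _ ih =>
    rw [(hS n (by omega)).2]
    exact (Finset.erase_subset _ _).trans (ih (by omega))

theorem IsEraseSeq.notMem (hS : IsEraseSeq S x N)
    {m n : ℕ} (hmn : m < n) (hn : n ≤ N) : x m ∉ S n := fun h => by
  have h' := hS.subset hmn hn h
  rw [(hS m (by omega)).2] at h'
  exact Finset.notMem_erase _ _ h'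

theorem IsEraseSeq.ne (hS : IsEraseSeq S x N)
    {m n : ℕ} (hmn : m < n) (hn : n < N) : x m ≠ x n := fun h =>
  hS.notMem hmn hn.le (h ▸ (hS n hn).1)

theorem IsEraseSeq.injOn (hS : IsEraseSeq S x N) :
    Set.InjOn x (Finset.range N) := by
  intro m hm n hn h
  simp only [Finset.coe_range, Set.mem_Iio] at hm hn
  rcases lt_trichotomy m n with hmn | rfl | hnm
  · exact absurd h (hS.ne hmn hn)
  · rfl
  · exact absurd h.symm (hS.ne hnm hm)

theorem IsEraseSeq.image_range_eq (hS : IsEraseSeq S x N)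
    (hN : (S 0).card = N) : (Finset.range N).image x = S 0 := by
  refine Finset.eq_of_subset_of_card_le ?_ ?_
  · intro y hy
    obtain ⟨n, hn, rfl⟩ := Finset.mem_image.1 hy
    have hn : n < N := Finset.mem_range.1 hn
    exact hS.subset (Nat.zero_le n) hn.le (hS n hn).1
  · rw [Finset.card_image_of_injOn (hS.injOn), Finset.card_range, hN]

theorem IsEraseSeq.existsUnique (hS : IsEraseSeq S x N)
    (hN : (S 0).card = N) {y : α} (hy : y ∈ S 0) : ∃! n, n < N ∧ x n = y := by
  rw [← hS.image_range_eq hN, Finset.mem_image] at hy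
  obtain ⟨n, hn, rfl⟩ := hy
  exact ⟨n, ⟨Finset.mem_range.1 hn, rfl⟩, fun m hm =>
    hS.injOn (Finset.mem_range.2 hm.1) hn hm.2⟩

theorem IsEraseSeq.lt_succ {β : Type*} [LinearOrder β] {f : α → β}
    (hS : IsEraseSeq S x N)
    (hf : Set.InjOn f (S 0)) (hmin : ∀ n < N, ∀ y ∈ S n, f (x n) ≤ f y)
    {n : ℕ} (hn : n + 1 < N) : f (x n) < f (x (n + 1)) := by
  have hnext : x (n + 1) ∈ (S n).erase (x n) := (hS n (by omega)).2 ▸ (hS (n + 1) hn).1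
  have hsub : S n ⊆ S 0 := hS.subset (Nat.zero_le n) (by omega)
  refine (hmin n (by omega) _ (Finset.mem_of_mem_erase hnext)).lt_of_ne fun h => ?_
  exact Finset.ne_of_mem_erase hnext
    (hf (hsub (Finset.mem_of_mem_erase hnext)) (hsub (hS n (by omega)).1) h.symm)

end EraseSequence

namespace RangeMinSplit

def interval (I : ℕ × ℕ) : Finset ℕ := Finset.Icc I.1 I.2

def covered (Q : Finset (ℕ × ℕ)) : Finset ℕ := Q.biUnion interval

def pieces (I : ℕ × ℕ) (a : ℕ) : Finset (ℕ × ℕ) :=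
  (if I.1 < a then {(I.1, a - 1)} else ∅) ∪ (if a < I.2 then {(a + 1, I.2)} else ∅)

def split (Q : Finset (ℕ × ℕ)) (I : ℕ × ℕ) (a : ℕ) : Finset (ℕ × ℕ) :=
  ((Q.erase I) ∪ (if I.1 < a then {(I.1, a - 1)} else ∅)) ∪
    (if a < I.2 then {(a + 1, I.2)} else ∅)

theorem split_eq (Q : Finset (ℕ × ℕ)) (I : ℕ × ℕ) (a : ℕ) :
    split Q I a = Q.erase I ∪ pieces I a :=
  Finset.union_assoc _ _ _

theorem mem_pieces {I P : ℕ × ℕ} {a : ℕ} :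
    P ∈ pieces I a ↔ (I.1 < a ∧ P = (I.1, a - 1)) ∨ (a < I.2 ∧ P = (a + 1, I.2)) := by
  unfold pieces
  split_ifs <;> simp [*]

theorem le_of_mem_pieces {I P : ℕ × ℕ} {a : ℕ} (hP : P ∈ pieces I a) : P.1 ≤ P.2 := by
  rcases mem_pieces.1 hP with ⟨h, rfl⟩ | ⟨h, rfl⟩ <;> simp only <;> omega

theorem covered_pieces {I : ℕ × ℕ} {a : ℕ} (ha : a ∈ interval I) :
    covered (pieces I a) = (interval I).erase a := by
  ext y
  simp only [covered, interval, Finset.mem_biUnion, mem_pieces, Finset.mem_erase,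
    Finset.mem_Icc] at ha ⊢
  constructor
  · rintro ⟨P, ⟨h, rfl⟩ | ⟨h, rfl⟩, hy⟩ <;> simp only at hy <;> omega
  · intro hy
    rcases lt_or_gt_of_ne hy.1 with h | h
    · exact ⟨_, Or.inl ⟨by omega, rfl⟩, by simp only; omega⟩
    · exact ⟨_, Or.inr ⟨by omega, rfl⟩, by simp only; omega⟩

theorem pairwiseDisjoint_pieces (I : ℕ × ℕ) (a : ℕ) :
    (pieces I a : Set (ℕ × ℕ)).PairwiseDisjoint interval := by
  intro P hP P' hP' hne
  rw [Finset.mem_coe, mem_pieces] at hP hP'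
  rw [Function.onFun, Finset.disjoint_left]
  rcases hP with ⟨_, rfl⟩ | ⟨_, rfl⟩ <;> rcases hP' with ⟨_, rfl⟩ | ⟨_, rfl⟩ <;>
    first
    | exact absurd rfl hne
    | simp only [interval, Finset.mem_Icc]; omega

structure IsIntervalFamily (Q : Finset (ℕ × ℕ)) : Prop where
  le : ∀ J ∈ Q, J.1 ≤ J.2
  pairwiseDisjoint : (Q : Set (ℕ × ℕ)).PairwiseDisjoint interval

theorem isIntervalFamily_singleton {I : ℕ × ℕ} (hI : I.1 ≤ I.2) : IsIntervalFamily {I} where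
  le J hJ := Finset.mem_singleton.1 hJ ▸ hI
  pairwiseDisjoint := by
    rw [Finset.coe_singleton]
    exact Set.pairwiseDisjoint_singleton _ _

variable {Q : Finset (ℕ × ℕ)} {I : ℕ × ℕ} {a : ℕ}

theorem IsIntervalFamily.notMem_covered_erase (hQ : IsIntervalFamily Q) (hI : I ∈ Q)
    (ha : a ∈ interval I) : a ∉ covered (Q.erase I) := by
  intro h
  obtain ⟨J, hJ, haJ⟩ := Finset.mem_biUnion.1 h
  rw [Finset.mem_erase] at hJ
  exact Finset.disjoint_left.1 (hQ.pairwiseDisjoint hJ.2 hI hJ.1) haJ ha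

theorem IsIntervalFamily.covered_split (hQ : IsIntervalFamily Q) (hI : I ∈ Q)
    (ha : a ∈ interval I) : covered (split Q I a) = (covered Q).erase a := by
  have hQI : covered Q = interval I ∪ covered (Q.erase I) := by
    conv_lhs => rw [← Finset.insert_erase hI]
    exact Finset.biUnion_insert
  rw [split_eq, covered, Finset.union_biUnion, ← covered, ← covered, covered_pieces ha, hQI,
    Finset.erase_union_distrib, Finset.erase_eq_of_notMem (hQ.notMem_covered_erase hI ha),
    Finset.union_comm]

theorem IsIntervalFamily.split (hQ : IsIntervalFamily Q) (hI : I ∈ Q) (ha : a ∈ interval I) :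
    IsIntervalFamily (split Q I a) where
  le J hJ := by
    rw [split_eq, Finset.mem_union] at hJ
    exact hJ.elim (fun h => hQ.le J (Finset.mem_of_mem_erase h)) le_of_mem_pieces
  pairwiseDisjoint := by
    rw [split_eq, Finset.coe_union]
    refine (hQ.pairwiseDisjoint.subset (by simp)).union (pairwiseDisjoint_pieces I a) ?_
    intro J hJ P hP _
    have hPI : interval P ⊆ interval I := fun y hy => by
      have hy' : y ∈ covered (pieces I a) := Finset.mem_biUnion.2 ⟨P, hP, hy⟩
      rw [covered_pieces ha] at hy'
      exact Finset.mem_of_mem_erase hy'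
    rw [Finset.mem_coe, Finset.mem_erase] at hJ
    exact (hQ.pairwiseDisjoint hJ.2 hI hJ.1).mono_right hPI

variable {β : Type*} [Preorder β] {A : ℕ → β} {amin : ℕ × ℕ → ℕ}

def IsArgmin (A : ℕ → β) (amin : ℕ × ℕ → ℕ) : Prop :=
  ∀ I : ℕ × ℕ, I.1 ≤ I.2 → amin I ∈ interval I ∧ ∀ t ∈ interval I, A (amin I) ≤ A t

theorem IsIntervalFamily.le_of_mem_covered (hA : IsArgmin A amin) (hQ : IsIntervalFamily Q)
    (hmin : ∀ J ∈ Q, A (amin I) ≤ A (amin J)) {y : ℕ} (hy : y ∈ covered Q) : A (amin I) ≤ A y := by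
  obtain ⟨J, hJ, hyJ⟩ := Finset.mem_biUnion.1 hy
  exact (hmin J hJ).trans ((hA J (hQ.le J hJ)).2 y hyJ)

theorem IsIntervalFamily.selection_step (hA : IsArgmin A amin) (hQ : IsIntervalFamily Q)
    (hI : I ∈ Q) (hmin : ∀ J ∈ Q, A (amin I) ≤ A (amin J)) :
    (amin I ∈ covered Q ∧
      covered (RangeMinSplit.split Q I (amin I)) = (covered Q).erase (amin I)) ∧
      ∀ y ∈ covered Q, A (amin I) ≤ A y := by
  have ha := (hA I (hQ.le I hI)).1
  exact ⟨⟨Finset.mem_biUnion.2 ⟨I, hI, ha⟩, hQ.covered_split hI ha⟩,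
    fun _ => hQ.le_of_mem_covered hA hmin⟩

end RangeMinSplit

open RangeMinSplit in
theorem stmt18_general (A : ℕ → ℕ) (l r : ℕ)
    (hinj : ∀ s t, l ≤ s → s ≤ r → l ≤ t → t ≤ r → A s = A t → s = t)
    (amin : ℕ × ℕ → ℕ)
    (hamin : ∀ I : ℕ × ℕ, I.1 ≤ I.2 → I.1 ≤ amin I ∧ amin I ≤ I.2 ∧
      ∀ t, I.1 ≤ t → t ≤ I.2 → A (amin I) ≤ A t)
    (N : ℕ) (hN : N = r + 1 - l)
    (Q : ℕ → Finset (ℕ × ℕ)) (out : ℕ → ℕ)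
    (hQ0 : Q 0 = {(l, r)})
    (hstep : ∀ n < N, ∃ I ∈ Q n, out n = amin I ∧
      (∀ J ∈ Q n, A (amin I) ≤ A (amin J)) ∧
      Q (n + 1) = (((Q n).erase I) ∪
        (if I.1 < amin I then {(I.1, amin I - 1)} else ∅)) ∪
        (if amin I < I.2 then {(amin I + 1, I.2)} else ∅)) :
    (∀ s, l ≤ s → s ≤ r → ∃! n, n < N ∧ out n = s) ∧
    (∀ n, n + 1 < N → A (out n) < A (out (n + 1))) := by
  have hA : IsArgmin A amin := fun I hI =>
    ⟨Finset.mem_Icc.2 ⟨(hamin I hI).1, (hamin I hI).2.1⟩,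
      fun t ht => (hamin I hI).2.2 t (Finset.mem_Icc.1 ht).1 (Finset.mem_Icc.1 ht).2⟩
  have hfam : ∀ n < N, IsIntervalFamily (Q n) := by
    intro n
    induction n with
    | zero => intro _; rw [hQ0]; exact isIntervalFamily_singleton (by simp only; omega)
    | succ n ih =>
      intro hn
      obtain ⟨I, hI, -, -, hQn⟩ := hstep n (by omega)
      have hQ := ih (by omega)
      exact hQn ▸ hQ.split hI (hA I (hQ.le I hI)).1
  have hsel : ∀ n < N, (out n ∈ covered (Q n) ∧
      covered (Q (n + 1)) = (covered (Q n)).erase (out n)) ∧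
      ∀ y ∈ covered (Q n), A (out n) ≤ A y := by
    intro n hn
    obtain ⟨I, hI, hout, hmin, hQn⟩ := hstep n hn
    rw [hQn, hout]
    exact (hfam n hn).selection_step hA hI hmin
  have hS : IsEraseSeq (fun n => covered (Q n)) out N := fun n hn => (hsel n hn).1
  have hcov0 : covered (Q 0) = Finset.Icc l r := by
    rw [hQ0]; exact Finset.singleton_biUnion
  refine ⟨fun s hs hs' => hS.existsUnique ?_ ?_,
    fun n hn => hS.lt_succ (f := A) ?_ (fun n hn => (hsel n hn).2) hn⟩
  · rw [hcov0, Nat.card_Icc, hN]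
  · rw [hcov0]; exact Finset.mem_Icc.2 ⟨hs, hs'⟩
  · intro s hs t ht
    rw [Finset.mem_coe, hcov0, Finset.mem_Icc] at hs ht
    exact hinj s t hs.1 hs.2 ht.1 ht.2

/-- **Reporting in sorted order via recursive range-minimum splitting.**
`A` is injective on `{l,…,r}` and `amin` returns the argmin of `A` on a
(nonempty) integer interval.  The process keeps a set `Q n` of intervals,
starting from `{(l,r)}`; at each step it picks an interval `I ∈ Q n` whose
argmin has minimal `A`-value among all intervals of `Q n`, outputs that
argmin `out n`, and replaces `I` by the (nonempty) pieces to the left and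
right of the argmin.  After `N = r + 1 − l` steps the process has output
every index of `{l,…,r}` exactly once, in increasing order of `A`-value. -/
theorem stmt18 (A : ℕ → ℕ) (l r : ℕ) (hlr : l ≤ r)
    (hinj : ∀ s t, l ≤ s → s ≤ r → l ≤ t → t ≤ r → A s = A t → s = t)
    (amin : ℕ × ℕ → ℕ)
    (hamin : ∀ I : ℕ × ℕ, I.1 ≤ I.2 → I.1 ≤ amin I ∧ amin I ≤ I.2 ∧
      ∀ t, I.1 ≤ t → t ≤ I.2 → A (amin I) ≤ A t)
    (N : ℕ) (hN : N = r + 1 - l)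
    (Q : ℕ → Finset (ℕ × ℕ)) (out : ℕ → ℕ)
    (hQ0 : Q 0 = {(l, r)})
    (hstep : ∀ n < N, ∃ I ∈ Q n, out n = amin I ∧
      (∀ J ∈ Q n, A (amin I) ≤ A (amin J)) ∧
      Q (n + 1) = (((Q n).erase I) ∪
        (if I.1 < amin I then {(I.1, amin I - 1)} else ∅)) ∪
        (if amin I < I.2 then {(amin I + 1, I.2)} else ∅)) :
    (∀ s, l ≤ s → s ≤ r → ∃! n, n < N ∧ out n = s) ∧
    (∀ n, n + 1 < N → A (out n) < A (out (n + 1))) :=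
  stmt18_general A l r hinj amin hamin N hN Q out hQ0 hstep
end
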